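/- arXiv:1804.01311 — 2 statements merged into one kernel-verified Lean document; each statement's English description precedes it below -/
import Mathlib

section
/- For a homogeneous polynomial p of degree m on ℝ^d, define the (κ=0) Hermite polynomial H_p(x) = (−1/2)^m e^{‖x‖²} p(∂) e^{−‖x‖²}. Then H_p(x) = Σ_{j=0}^{⌊m/2⌋} ((−1)^j/(2^{2j} j!)) (Δ^j p)(x). In particular, if p is harmonic then H_p = p. -/
open Finset MvPolynomial Real

noncomputable section

/-- Partial derivative in direction `l` on Euclidean space. -/
def pd (d : ℕ) (l : Fin d) (f : EuclideanSpace ℝ (Fin d) → ℝ) :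
    EuclideanSpace ℝ (Fin d) → ℝ :=
  fun x => fderiv ℝ f x (EuclideanSpace.single l 1)

/-- Iterated partial derivative for a multi-index `s`. -/
def Dmulti (d : ℕ) (s : Fin d →₀ ℕ) (f : EuclideanSpace ℝ (Fin d) → ℝ) :
    EuclideanSpace ℝ (Fin d) → ℝ :=
  (List.finRange d).foldr (fun l g => (pd d l)^[s l] g) f

/-- The constant-coefficient differential operator `p(∂)`. -/
def polyOp (d : ℕ) (p : MvPolynomial (Fin d) ℝ) (f : EuclideanSpace ℝ (Fin d) → ℝ) :
    EuclideanSpace ℝ (Fin d) → ℝ :=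
  fun x => ∑ s ∈ p.support, p.coeff s * Dmulti d s f x

/-- The Laplacian on functions on Euclidean space. -/
def lap (d : ℕ) (f : EuclideanSpace ℝ (Fin d) → ℝ) : EuclideanSpace ℝ (Fin d) → ℝ :=
  fun x => ∑ l : Fin d, pd d l (pd d l f) x

/-- The formal Laplacian on polynomials. -/
def lapPoly (d : ℕ) (p : MvPolynomial (Fin d) ℝ) : MvPolynomial (Fin d) ℝ :=
  ∑ l : Fin d, pderiv l (pderiv l p)

/-- Evaluation of a polynomial at a point of Euclidean space. -/
def peval (d : ℕ) (p : MvPolynomial (Fin d) ℝ) (x : EuclideanSpace ℝ (Fin d)) : ℝ :=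
  MvPolynomial.eval (fun l => x l) p

/-- The radial operator `(1/r) d/dr`. -/
def radOp (g : ℝ → ℝ) : ℝ → ℝ := fun r => deriv g r / r

/-!
Conjugation by the Gaussian turns `∂_l` into `T_l = ∂_l - 2 x_l`, so
`p(∂) e^{-‖x‖²} = (p(T) 1) e^{-‖x‖²}`. On polynomials let `E = e^{-Δ/4}` (a finite sum, since
`Δ` lowers the degree by two). From `[Δ, x_l] = 2 ∂_l` one gets `E (x_l q) = (x_l - ½ ∂_l) E q`,
i.e. `T_l (E q) = -2 E (x_l q)`. Starting from `E 1 = 1` this gives `T^s 1 = (-2)^{|s|} E (x^s)`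
for every monomial, hence `(-1/2)^m p(T) 1 = E p = ∑_j (-1)^j / (4^j j!) Δ^j p` for `p`
homogeneous of degree `m`; the terms with `2j > m` vanish.
-/

namespace MvPolynomial

variable {σ R : Type*} [CommSemiring R]

theorem pderiv_pderiv_comm (i j : σ) (q : MvPolynomial σ R) :
    pderiv i (pderiv j q) = pderiv j (pderiv i q) := by
  induction q using MvPolynomial.induction_on with
  | C a => simp
  | add p q hp hq => simp [hp, hq]
  | mul_X p k hp =>
    classical
    simp only [pderiv_mul, pderiv_X, map_add, hp, Pi.single_apply]
    split_ifs <;> simp; ring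

theorem pderiv_eq_zero_of_isHomogeneous_zero {φ : MvPolynomial σ R} (h : φ.IsHomogeneous 0)
    (i : σ) : pderiv i φ = 0 := by
  rw [← totalDegree_zero_iff_isHomogeneous, totalDegree_eq_zero_iff_eq_C] at h
  rw [h, pderiv_C]

end MvPolynomial

variable {d : ℕ}

def lapEnd (d : ℕ) : Module.End ℝ (MvPolynomial (Fin d) ℝ) :=
  ∑ l : Fin d, (pderiv l).toLinearMap * (pderiv l).toLinearMap

theorem coe_lapEnd : ⇑(lapEnd d) = lapPoly d := by
  ext q : 1
  simp [lapEnd, lapPoly]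

theorem lapPoly_iterate (j : ℕ) : (lapPoly d)^[j] = ⇑(lapEnd d ^ j) := by
  rw [Module.End.coe_pow, coe_lapEnd]

theorem pderiv_lapEnd_pow (l : Fin d) (j : ℕ) (q : MvPolynomial (Fin d) ℝ) :
    pderiv l ((lapEnd d ^ j) q) = (lapEnd d ^ j) (pderiv l q) := by
  induction j generalizing q with
  | zero => rfl
  | succ j ih =>
    rw [pow_succ, Module.End.mul_apply, Module.End.mul_apply, ih, coe_lapEnd]
    simp only [lapPoly, map_sum, pderiv_pderiv_comm l]

theorem lapPoly_X_mul (l : Fin d) (q : MvPolynomial (Fin d) ℝ) :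
    lapPoly d (X l * q) = X l * lapPoly d q + 2 * pderiv l q := by
  have hterm : ∀ k : Fin d, pderiv k (pderiv k (X l * q))
      = X l * pderiv k (pderiv k q) + if k = l then 2 * pderiv l q else 0 := by
    intro k
    rcases eq_or_ne k l with rfl | hkl
    · simp; ring
    · simp [pderiv_X_of_ne hkl.symm, hkl]
  simp only [lapPoly, hterm, sum_add_distrib, mul_sum, sum_ite_eq', mem_univ, if_true]

theorem lapEnd_pow_succ_X_mul (j : ℕ) (l : Fin d) (q : MvPolynomial (Fin d) ℝ) :
    (lapEnd d ^ (j + 1)) (X l * q)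
      = X l * (lapEnd d ^ (j + 1)) q + (2 * (j + 1) : ℝ) • pderiv l ((lapEnd d ^ j) q) := by
  have hpow : ∀ k r, (lapEnd d ^ k) (lapEnd d r) = (lapEnd d ^ (k + 1)) r := fun k r => by
    rw [pow_succ, Module.End.mul_apply]
  induction j generalizing q with
  | zero => simp [coe_lapEnd, lapPoly_X_mul, two_smul, two_mul]
  | succ j ih =>
    rw [← hpow, coe_lapEnd, lapPoly_X_mul, ← coe_lapEnd, map_add, ih, hpow, hpow,
      two_mul (pderiv l q), map_add, ← pderiv_lapEnd_pow]
    push_cast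
    module

theorem MvPolynomial.IsHomogeneous.lapPoly {q : MvPolynomial (Fin d) ℝ} {n : ℕ}
    (h : q.IsHomogeneous n) : (lapPoly d q).IsHomogeneous (n - 2) :=
  IsHomogeneous.sum _ _ _ fun l _ => by simpa [Nat.sub_sub] using h.pderiv.pderiv

theorem lapEnd_pow_eq_zero_of_isHomogeneous {q : MvPolynomial (Fin d) ℝ} {n j : ℕ}
    (h : q.IsHomogeneous n) (hn : n < 2 * j) : (lapEnd d ^ j) q = 0 := by
  induction j generalizing q n with
  | zero => omega
  | succ j ih =>
    rw [pow_succ, Module.End.mul_apply, coe_lapEnd]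
    obtain hn2 | hn2 := lt_or_ge n 2
    · have hdeg : n - 1 = 0 := by omega
      have hlap : lapPoly d q = 0 :=
        sum_eq_zero fun l _ => pderiv_eq_zero_of_isHomogeneous_zero (hdeg ▸ h.pderiv) l
      rw [hlap, map_zero]
    · exact ih h.lapPoly (by omega)

theorem lapEnd_pow_eq_zero_of_totalDegree_lt {q : MvPolynomial (Fin d) ℝ} {j : ℕ}
    (hq : q.totalDegree < 2 * j) : (lapEnd d ^ j) q = 0 := by
  rw [← sum_homogeneousComponent q, map_sum]
  exact sum_eq_zero fun k hk =>
    lapEnd_pow_eq_zero_of_isHomogeneous (homogeneousComponent_isHomogeneous k q)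
      (by rw [mem_range] at hk; omega)

/-- `(-1/4)^j / j!`, the coefficients of `e^{-Δ/4}`. -/
def expLapCoeff (j : ℕ) : ℝ := (-1) ^ j / (2 ^ (2 * j) * (Nat.factorial j : ℝ))

theorem expLapCoeff_succ_mul (j : ℕ) :
    expLapCoeff (j + 1) * (2 * (j + 1)) = -(1 / 2) * expLapCoeff j := by
  simp only [expLapCoeff, Nat.factorial_succ, mul_add, pow_succ]
  push_cast
  field_simp
  ring

def expLapTrunc (d N : ℕ) : Module.End ℝ (MvPolynomial (Fin d) ℝ) :=
  ∑ j ∈ range N, expLapCoeff j • lapEnd d ^ j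

theorem expLapTrunc_apply (N : ℕ) (q : MvPolynomial (Fin d) ℝ) :
    expLapTrunc d N q = ∑ j ∈ range N, expLapCoeff j • (lapEnd d ^ j) q := by
  simp [expLapTrunc]

theorem expLapTrunc_succ_X_mul (N : ℕ) (l : Fin d) (q : MvPolynomial (Fin d) ℝ) :
    expLapTrunc d (N + 1) (X l * q)
      = X l * expLapTrunc d (N + 1) q - (1 / 2 : ℝ) • pderiv l (expLapTrunc d N q) := by
  have hterm : ∀ j, expLapCoeff (j + 1) • (lapEnd d ^ (j + 1)) (X l * q)
      = X l * (expLapCoeff (j + 1) • (lapEnd d ^ (j + 1)) q)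
        - (1 / 2 : ℝ) • pderiv l (expLapCoeff j • (lapEnd d ^ j) q) := by
    intro j
    rw [lapEnd_pow_succ_X_mul, smul_add, smul_smul, expLapCoeff_succ_mul, (pderiv l).map_smul,
      smul_smul, mul_smul_comm]
    module
  rw [expLapTrunc_apply, expLapTrunc_apply, expLapTrunc_apply, sum_range_succ', sum_range_succ',
    sum_congr rfl fun j _ => hterm j, sum_sub_distrib, map_sum, smul_sum, mul_add, mul_sum,
    pow_zero, Module.End.one_apply, Module.End.one_apply, mul_smul_comm]
  abel

theorem expLapTrunc_add (N k : ℕ) {q : MvPolynomial (Fin d) ℝ} (hq : q.totalDegree < 2 * N) :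
    expLapTrunc d (N + k) q = expLapTrunc d N q := by
  rw [expLapTrunc_apply, expLapTrunc_apply, sum_range_add, add_eq_left]
  exact sum_eq_zero fun j _ => by
    rw [lapEnd_pow_eq_zero_of_totalDegree_lt (by omega), smul_zero]

/-- `e^{-Δ/4} q`. -/
def expLap (q : MvPolynomial (Fin d) ℝ) : MvPolynomial (Fin d) ℝ :=
  expLapTrunc d (q.totalDegree + 1) q

theorem expLapTrunc_eq_expLap {N : ℕ} {q : MvPolynomial (Fin d) ℝ} (hq : q.totalDegree < 2 * N) :
    expLapTrunc d N q = expLap q := by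
  rw [expLap, ← expLapTrunc_add N (q.totalDegree + 1) hq, add_comm,
    expLapTrunc_add _ N (by omega)]

theorem expLap_one : expLap (1 : MvPolynomial (Fin d) ℝ) = 1 := by
  simp [expLap, expLapTrunc_apply, expLapCoeff]

theorem expLap_X_mul (l : Fin d) (q : MvPolynomial (Fin d) ℝ) :
    expLap (X l * q) = X l * expLap q - (1 / 2 : ℝ) • pderiv l (expLap q) := by
  have hdeg : (X l * q).totalDegree ≤ q.totalDegree + 1 :=
    (totalDegree_mul _ _).trans (by rw [totalDegree_X, add_comm])
  rw [← expLapTrunc_eq_expLap (N := q.totalDegree + 2) (by omega), expLapTrunc_succ_X_mul,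
    expLapTrunc_eq_expLap (by omega), expLapTrunc_eq_expLap (by omega)]

theorem peval_expLapTrunc (N : ℕ) (q : MvPolynomial (Fin d) ℝ) (x : EuclideanSpace ℝ (Fin d)) :
    peval d (expLapTrunc d N q) x
      = ∑ j ∈ range N, expLapCoeff j * peval d ((lapPoly d)^[j] q) x := by
  simp [expLapTrunc_apply, lapPoly_iterate, peval]

theorem expLapTrunc_succ_of_lapPoly_eq_zero (N : ℕ) {q : MvPolynomial (Fin d) ℝ}
    (hq : lapPoly d q = 0) : expLapTrunc d (N + 1) q = q := by
  rw [expLapTrunc_apply, sum_range_succ']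
  simp [pow_succ, coe_lapEnd, hq, expLapCoeff]

/-- `∂_l` conjugated by the Gaussian: `e^{‖x‖²} ∂_l (q e^{-‖x‖²}) = ∂_l q - 2 x_l q`. -/
def gaussConj (l : Fin d) : Module.End ℝ (MvPolynomial (Fin d) ℝ) :=
  (pderiv l).toLinearMap - 2 • LinearMap.mulLeft ℝ (X l)

theorem gaussConj_apply (l : Fin d) (q : MvPolynomial (Fin d) ℝ) :
    gaussConj l q = pderiv l q - 2 * X l * q := by
  simp [gaussConj, two_smul, two_mul, add_mul]

theorem gaussConj_expLap (l : Fin d) (q : MvPolynomial (Fin d) ℝ) :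
    gaussConj l (expLap q) = (-2 : ℝ) • expLap (X l * q) := by
  rw [gaussConj_apply, expLap_X_mul, smul_sub, smul_smul, ← smul_mul_assoc]
  norm_num
  rw [two_smul]
  ring

theorem gaussConj_pow_expLap (l : Fin d) (k : ℕ) (q : MvPolynomial (Fin d) ℝ) :
    (gaussConj l ^ k) (expLap q) = (-2 : ℝ) ^ k • expLap (X l ^ k * q) := by
  induction k with
  | zero => simp
  | succ k ih =>
    rw [pow_succ', Module.End.mul_apply, ih, map_smul, gaussConj_expLap, smul_smul, pow_succ,
      pow_succ', mul_assoc]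

theorem prod_map_gaussConj_pow_expLap (s : Fin d →₀ ℕ) (L : List (Fin d))
    (q : MvPolynomial (Fin d) ℝ) :
    (L.map fun l => gaussConj l ^ s l).prod (expLap q)
      = (-2 : ℝ) ^ (L.map s).sum • expLap ((L.map fun l => X l ^ s l).prod * q) := by
  induction L with
  | nil => simp
  | cons l L ih =>
    simp only [List.map_cons, List.prod_cons, List.sum_cons, Module.End.mul_apply, ih, map_smul,
      gaussConj_pow_expLap, smul_smul, pow_add, mul_assoc]
    rw [mul_comm]

def conjDmulti (s : Fin d →₀ ℕ) : Module.End ℝ (MvPolynomial (Fin d) ℝ) :=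
  ((List.finRange d).map fun l => gaussConj l ^ s l).prod

theorem conjDmulti_one (s : Fin d →₀ ℕ) :
    conjDmulti s 1 = (-2 : ℝ) ^ s.degree • expLap (monomial s 1) := by
  rw [conjDmulti, ← expLap_one, prod_map_gaussConj_pow_expLap, mul_one, ← Fin.prod_univ_def,
    ← Fin.sum_univ_def, ← Finsupp.degree_eq_sum, monomial_eq, C_1, one_mul,
    Finsupp.prod_fintype _ _ fun _ => pow_zero _]

def conjPolyOp (p : MvPolynomial (Fin d) ℝ) : Module.End ℝ (MvPolynomial (Fin d) ℝ) :=
  ∑ s ∈ p.support, p.coeff s • conjDmulti s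

theorem conjPolyOp_one_of_isHomogeneous {p : MvPolynomial (Fin d) ℝ} {m N : ℕ}
    (hp : p.IsHomogeneous m) (hN : m < 2 * N) :
    conjPolyOp p 1 = (-2 : ℝ) ^ m • expLapTrunc d N p := by
  have hmono : ∀ s ∈ p.support,
      conjDmulti s 1 = (-2 : ℝ) ^ m • expLapTrunc d N (monomial s 1) := by
    intro s hs
    have hdeg : s.degree = m := by rw [Finsupp.degree_apply, hp.degree_eq_sum_deg_support hs]
    rw [conjDmulti_one, hdeg, expLapTrunc_eq_expLap]
    exact (isHomogeneous_monomial 1 hdeg).totalDegree_le.trans_lt hN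
  conv_rhs => rw [p.as_sum]
  simp only [conjPolyOp, LinearMap.coe_sum, Finset.sum_apply, LinearMap.smul_apply, map_sum,
    smul_sum]
  refine sum_congr rfl fun s hs => ?_
  rw [hmono s hs, smul_comm, ← map_smul, smul_monomial, smul_eq_mul, mul_one]

theorem pd_mul {f g : EuclideanSpace ℝ (Fin d) → ℝ} {x : EuclideanSpace ℝ (Fin d)} (l : Fin d)
    (hf : DifferentiableAt ℝ f x) (hg : DifferentiableAt ℝ g x) :
    pd d l (fun y => f y * g y) x = pd d l f x * g x + f x * pd d l g x := by
  rw [pd, pd, pd, fderiv_fun_mul hf hg]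
  simp only [add_apply, smul_apply, smul_eq_mul]
  ring

theorem peval_C (a : ℝ) : peval d (C a) = fun _ => a := by
  ext; simp [peval]

theorem peval_add (p q : MvPolynomial (Fin d) ℝ) :
    peval d (p + q) = fun y => peval d p y + peval d q y := by
  ext; simp [peval]

theorem peval_mul_X (p : MvPolynomial (Fin d) ℝ) (i : Fin d) :
    peval d (p * X i) = fun y => peval d p y * y i := by
  ext; simp [peval]

theorem differentiable_peval (q : MvPolynomial (Fin d) ℝ) : Differentiable ℝ (peval d q) := by
  induction q using MvPolynomial.induction_on with
  | C a => rw [peval_C]; exact differentiable_const a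
  | add p q hp hq => rw [peval_add]; exact hp.add hq
  | mul_X p i hp => rw [peval_mul_X]; exact hp.mul (by fun_prop)

theorem pd_peval (l : Fin d) (q : MvPolynomial (Fin d) ℝ) :
    pd d l (peval d q) = peval d (pderiv l q) := by
  funext x
  induction q using MvPolynomial.induction_on with
  | C a => simp [pd, peval_C, peval]
  | add p q hp hq =>
    rw [map_add, peval_add, pd,
      fderiv_fun_add (differentiable_peval p x) (differentiable_peval q x)]
    simp only [add_apply]
    rw [← pd, ← pd, hp, hq, peval_add]
  | mul_X p i hp =>
    rw [peval_mul_X, pd_mul (g := fun y => y i) l (differentiable_peval p x) (by fun_prop), hp]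
    have hcoord : fderiv ℝ (fun y : EuclideanSpace ℝ (Fin d) => y i) x = EuclideanSpace.proj i :=
      (EuclideanSpace.proj (𝕜 := ℝ) i).fderiv
    simp only [pd, hcoord, pderiv_mul, pderiv_X]
    rcases eq_or_ne i l with rfl | hil
    · simp [peval]
    · simp [peval, hil]

theorem differentiable_gaussian :
    Differentiable ℝ fun y : EuclideanSpace ℝ (Fin d) => exp (-‖y‖ ^ 2) :=
  (differentiable_id.norm_sq ℝ).neg.exp

theorem pd_gaussian (l : Fin d) (x : EuclideanSpace ℝ (Fin d)) :
    pd d l (fun y => exp (-‖y‖ ^ 2)) x = -2 * x l * exp (-‖x‖ ^ 2) := by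
  have h : HasFDerivAt (fun y : EuclideanSpace ℝ (Fin d) => exp (-‖y‖ ^ 2))
      (exp (-‖x‖ ^ 2) • -((2 : ℕ) • innerSL ℝ x)) x :=
    (hasStrictFDerivAt_norm_sq x).hasFDerivAt.neg.exp
  rw [pd, h.fderiv]
  simp [EuclideanSpace.inner_single_right]
  ring

theorem pd_peval_mul_gaussian (l : Fin d) (q : MvPolynomial (Fin d) ℝ) :
    pd d l (fun y => peval d q y * exp (-‖y‖ ^ 2))
      = fun y => peval d (gaussConj l q) y * exp (-‖y‖ ^ 2) := by
  funext x
  rw [pd_mul l (differentiable_peval q x) (differentiable_gaussian x), pd_peval, pd_gaussian,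
    gaussConj_apply]
  simp [peval]
  ring

theorem pd_iterate_peval_mul_gaussian (l : Fin d) (k : ℕ) (q : MvPolynomial (Fin d) ℝ) :
    (pd d l)^[k] (fun y => peval d q y * exp (-‖y‖ ^ 2))
      = fun y => peval d ((gaussConj l ^ k) q) y * exp (-‖y‖ ^ 2) := by
  induction k generalizing q with
  | zero => rfl
  | succ k ih =>
    rw [Function.iterate_succ_apply, pd_peval_mul_gaussian, ih, pow_succ, Module.End.mul_apply]

theorem Dmulti_peval_mul_gaussian (s : Fin d →₀ ℕ) (q : MvPolynomial (Fin d) ℝ) :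
    Dmulti d s (fun y => peval d q y * exp (-‖y‖ ^ 2))
      = fun y => peval d (conjDmulti s q) y * exp (-‖y‖ ^ 2) := by
  rw [Dmulti, conjDmulti]
  induction List.finRange d with
  | nil => rfl
  | cons l L ih =>
    rw [List.foldr_cons, ih, pd_iterate_peval_mul_gaussian, List.map_cons, List.prod_cons,
      Module.End.mul_apply]

theorem polyOp_peval_mul_gaussian (p q : MvPolynomial (Fin d) ℝ) (x : EuclideanSpace ℝ (Fin d)) :
    polyOp d p (fun y => peval d q y * exp (-‖y‖ ^ 2)) x
      = peval d (conjPolyOp p q) x * exp (-‖x‖ ^ 2) := by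
  simp only [polyOp, Dmulti_peval_mul_gaussian]
  simp [conjPolyOp, peval, sum_mul, mul_assoc]

theorem hermite_eq_peval_expLapTrunc {p : MvPolynomial (Fin d) ℝ} {m N : ℕ}
    (hp : p.IsHomogeneous m) (hN : m < 2 * N) (x : EuclideanSpace ℝ (Fin d)) :
    (-1 / 2 : ℝ) ^ m * exp (‖x‖ ^ 2) * polyOp d p (fun y => exp (-‖y‖ ^ 2)) x
      = peval d (expLapTrunc d N p) x := by
  have hG : (fun y : EuclideanSpace ℝ (Fin d) => exp (-‖y‖ ^ 2))
      = fun y => peval d 1 y * exp (-‖y‖ ^ 2) := by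
    simp [peval]
  rw [hG, polyOp_peval_mul_gaussian, conjPolyOp_one_of_isHomogeneous hp hN]
  calc (-1 / 2 : ℝ) ^ m * exp (‖x‖ ^ 2) *
        (peval d ((-2 : ℝ) ^ m • expLapTrunc d N p) x * exp (-‖x‖ ^ 2))
      = ((-1 / 2) * (-2) : ℝ) ^ m * exp (‖x‖ ^ 2 + -‖x‖ ^ 2) * peval d (expLapTrunc d N p) x := by
        simp only [peval, smul_eval, mul_pow, exp_add]
        ring
    _ = peval d (expLapTrunc d N p) x := by norm_num

theorem hermite_rodrigues (d m : ℕ) (p : MvPolynomial (Fin d) ℝ)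
    (hp : p.IsHomogeneous m) :
    (∀ x : EuclideanSpace ℝ (Fin d),
        (-1 / 2 : ℝ) ^ m * Real.exp (‖x‖ ^ 2) *
            polyOp d p (fun y => Real.exp (-‖y‖ ^ 2)) x =
          ∑ j ∈ range (m / 2 + 1),
            ((-1 : ℝ) ^ j / (2 ^ (2 * j) * (Nat.factorial j : ℝ))) *
              peval d ((lapPoly d)^[j] p) x) ∧
      (lapPoly d p = 0 → ∀ x : EuclideanSpace ℝ (Fin d),
        (-1 / 2 : ℝ) ^ m * Real.exp (‖x‖ ^ 2) *
            polyOp d p (fun y => Real.exp (-‖y‖ ^ 2)) x = peval d p x) := by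
  have hermite := hermite_eq_peval_expLapTrunc hp (N := m / 2 + 1) (by omega)
  exact ⟨fun x => (hermite x).trans (peval_expLapTrunc _ p x),
    fun hharm x => by rw [hermite, expLapTrunc_succ_of_lapPoly_eq_zero _ hharm]⟩
end
end

section
/- A homogeneous polynomial p of degree m on ℝ^d is harmonic if and only if p(∂) e^{−‖x‖²/2} = p(−x) e^{−‖x‖²/2} for all x ∈ ℝ^d. -/
open Finset MvPolynomial Real

noncomputable section

/-!
Differentiating `q(-y) e^{-‖y‖²/2}` in the direction `e_l` gives `(X_l q - ∂_l q)(-y) e^{-‖y‖²/2}`,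
so `p(∂) e^{-‖y‖²/2} = (H p)(-y) e^{-‖y‖²/2}`, where `H` sends the monomial `x^s` to the image of `1`
under the raising operators `X_l - ∂_l`, applied `s l` times in each direction. From
`[Δ, X_l] = 2 ∂_l` one gets `e^{-Δ/2} X_l = (X_l - ∂_l) e^{-Δ/2}`, where `e^{-Δ/2}` is a finite sum on
each polynomial because `Δ` is locally nilpotent; hence `H = e^{-Δ/2}`. The identity therefore says
`e^{-Δ/2} p = p`, that is `∑_{j ≥ 1} (-1/2)^j / j! Δ^j p = 0`, and applying `Δ^k` for decreasing `k`
peels this down to `Δ p = 0`.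
-/

open scoped Nat

theorem pow_succ_mul_eq_of_mul_eq {R : Type*} [Semiring R] {a b c : R} (h : a * b = b * a + c)
    (hc : Commute a c) (n : ℕ) : a ^ (n + 1) * b = b * a ^ (n + 1) + (n + 1) • (a ^ n * c) := by
  induction n with
  | zero => simpa using h
  | succ n ih =>
    calc a ^ (n + 1 + 1) * b = (a * b) * a ^ (n + 1) + (n + 1) • (a ^ (n + 1) * c) := by
          rw [pow_succ', mul_assoc, ih, mul_add, mul_smul_comm, ← mul_assoc, ← mul_assoc,
            ← pow_succ']
      _ = b * a ^ (n + 1 + 1) + (n + 1 + 1) • (a ^ (n + 1) * c) := by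
          rw [h, add_mul, mul_assoc, ← pow_succ', ← (hc.pow_left (n + 1)).eq, add_assoc,
            ← succ_nsmul']

namespace Module.End

section Commutator

variable {R M : Type*} [Semiring R] [AddCommMonoid M] [Module R M] {f g h : Module.End R M}

theorem pow_apply_comm (hfh : Commute f h) (n : ℕ) (v : M) : (f ^ n) (h v) = h ((f ^ n) v) :=
  LinearMap.congr_fun (hfh.pow_left n).eq v

theorem pow_succ_apply_eq_zero_of_mul_eq (hgh : f * g = g * f + h) (hfh : Commute f h) {N : ℕ}
    {v : M} (hv : (f ^ N) v = 0) : (f ^ (N + 1)) (g v) = 0 := by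
  rw [← mul_apply, pow_succ_mul_eq_of_mul_eq hgh hfh, LinearMap.add_apply, LinearMap.smul_apply,
    mul_apply, mul_apply, pow_apply_comm hfh, pow_map_zero_of_le N.le_succ hv, hv]
  simp

end Commutator

section LocallyNilpotentExp

variable {K M : Type*} [Field K] [AddCommGroup M] [Module K M] {f g h : Module.End K M}

/-- `exp (t • f)` applied to `v`; the `finsum` is `0` (junk) unless `f` is nilpotent on `v`. -/
def expApply (t : K) (f : Module.End K M) (v : M) : M :=
  ∑ᶠ j, (t ^ j / j ! : K) • (f ^ j) v

theorem expApply_eq_sum {t : K} {N : ℕ} {v : M} (hv : (f ^ N) v = 0) :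
    expApply t f v = ∑ j ∈ range N, (t ^ j / j ! : K) • (f ^ j) v := by
  refine finsum_eq_sum_of_support_subset _ fun j hj => ?_
  by_contra hjN
  exact hj (by simp only [pow_map_zero_of_le (by simpa using hjN) hv, smul_zero])

def expLocallyNilpotent (t : K) (f : Module.End K M) (hf : ∀ v, ∃ N, (f ^ N) v = 0) :
    Module.End K M where
  toFun := expApply t f
  map_add' v w := by
    obtain ⟨N, hv⟩ := hf v
    obtain ⟨N', hw⟩ := hf w
    replace hv := pow_map_zero_of_le (le_max_left N N') hv
    replace hw := pow_map_zero_of_le (le_max_right N N') hw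
    rw [expApply_eq_sum hv, expApply_eq_sum hw, expApply_eq_sum (by rw [map_add, hv, hw, add_zero]),
      ← sum_add_distrib]
    simp only [map_add, smul_add]
  map_smul' c v := by
    obtain ⟨N, hv⟩ := hf v
    rw [expApply_eq_sum hv, expApply_eq_sum (by rw [map_smul, hv, smul_zero]), smul_sum]
    simp only [map_smul, smul_comm c, RingHom.id_apply]

variable {t : K} {hf : ∀ v, ∃ N, (f ^ N) v = 0}

theorem expLocallyNilpotent_apply_eq_sum {N : ℕ} {v : M} (hv : (f ^ N) v = 0) :
    expLocallyNilpotent t f hf v = ∑ j ∈ range N, (t ^ j / j ! : K) • (f ^ j) v :=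
  expApply_eq_sum hv

theorem expLocallyNilpotent_apply_comm (hfh : Commute f h) (v : M) :
    expLocallyNilpotent t f hf (h v) = h (expLocallyNilpotent t f hf v) := by
  obtain ⟨N, hv⟩ := hf v
  rw [expLocallyNilpotent_apply_eq_sum hv,
    expLocallyNilpotent_apply_eq_sum (by rw [pow_apply_comm hfh, hv, map_zero]), map_sum]
  simp only [map_smul, pow_apply_comm hfh]

theorem expLocallyNilpotent_apply_of_mul_eq [CharZero K] (hgh : f * g = g * f + h)
    (hfh : Commute f h) (v : M) :
    expLocallyNilpotent t f hf (g v) =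
      g (expLocallyNilpotent t f hf v) + t • h (expLocallyNilpotent t f hf v) := by
  obtain ⟨N, hv⟩ := hf v
  have hterm (i : ℕ) : (t ^ (i + 1) / (i + 1)! : K) • (i + 1) • (f ^ i * h) v =
      t • (t ^ i / i ! : K) • (f ^ i * h) v := by
    rw [← Nat.cast_smul_eq_nsmul K, smul_smul, smul_smul, Nat.factorial_succ]
    congr 1
    push_cast
    field_simp
    ring
  rw [← expLocallyNilpotent_apply_comm hfh,
    expLocallyNilpotent_apply_eq_sum (pow_succ_apply_eq_zero_of_mul_eq hgh hfh hv),
    expLocallyNilpotent_apply_eq_sum (pow_map_zero_of_le N.le_succ hv),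
    expLocallyNilpotent_apply_eq_sum (N := N) (by rw [pow_apply_comm hfh, hv, map_zero]),
    sum_range_succ', sum_range_succ', map_add, map_sum, smul_sum]
  simp only [← mul_apply, pow_succ_mul_eq_of_mul_eq hgh hfh, LinearMap.add_apply,
    LinearMap.smul_apply, smul_add, sum_add_distrib, map_smul, hterm, pow_zero, mul_one, one_mul]
  abel

theorem expLocallyNilpotent_apply_eq_self_iff (ht : t ≠ 0) (v : M) :
    expLocallyNilpotent t f hf v = v ↔ f v = 0 := by
  constructor
  · intro hfix
    obtain ⟨N, hv⟩ := hf v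
    have hstep (k : ℕ) (hk : (f ^ (k + 2)) v = 0) : (f ^ (k + 1)) v = 0 := by
      have := congr((f ^ k) $(hfix))
      rw [expLocallyNilpotent_apply_eq_sum (pow_map_zero_of_le (N.le_add_right 2) hv),
        map_sum, sum_range_succ', sum_range_succ'] at this
      have hzero (i : ℕ) : (f ^ (k + (i + 1 + 1))) v = 0 := pow_map_zero_of_le (by omega) hk
      simp only [map_smul, ← mul_apply, ← pow_add] at this
      simpa [hzero, ht] using this
    simpa using Nat.decreasingInduction (motive := fun k _ => (f ^ (k + 1)) v = 0)
      (fun k _ => hstep k) (pow_map_zero_of_le N.le_succ hv) (Nat.zero_le N)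
  · intro hv
    rw [expLocallyNilpotent_apply_eq_sum (N := 1) (by simpa using hv)]
    simp

end LocallyNilpotentExp

end Module.End

open Module.End

theorem Function.Semiconj.foldr_iterate {ι α β : Type*} {F : α → β} {a : ι → α → α}
    {b : ι → β → β} (h : ∀ i, Function.Semiconj F (a i) (b i)) (n : ι → ℕ) (L : List ι) (x : α) :
    F (L.foldr (fun i y => (a i)^[n i] y) x) = L.foldr (fun i y => (b i)^[n i] y) (F x) := by
  induction L with
  | nil => rfl
  | cons i L ih => simp only [List.foldr_cons, ((h i).iterate_right (n i)).eq, ih]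

namespace MvPolynomial

theorem monomial_one_eq_foldr_X_mul {R : Type*} [CommSemiring R] {d : ℕ} (s : Fin d →₀ ℕ) :
    monomial s (1 : R) = (List.finRange d).foldr (fun i q => (X i * ·)^[s i] q) 1 := by
  simp only [mul_left_iterate]
  rw [← prod_X_pow_eq_monomial, ← Finsupp.prod, Finsupp.prod_fintype _ _ (fun _ => pow_zero _),
    Fin.prod_univ_def, List.prod_eq_foldr, List.foldr_map]

section Laplacian

variable {σ R : Type*} [CommRing R]

theorem pderiv_comm (i j : σ) (p : MvPolynomial σ R) :
    pderiv i (pderiv j p) = pderiv j (pderiv i p) := by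
  have h : ⁅pderiv i, pderiv j⁆ = (0 : Derivation R (MvPolynomial σ R) (MvPolynomial σ R)) :=
    derivation_ext fun k => by
      classical
      rw [Derivation.commutator_apply]
      simp [pderiv_X, Pi.single_apply, apply_ite (pderiv _)]
  simpa [Derivation.commutator_apply, sub_eq_zero] using congr($h p)

def hermiteRaise (i : σ) (p : MvPolynomial σ R) : MvPolynomial σ R :=
  X i * p - pderiv i p

variable (σ R) [Fintype σ]

def laplacian : Module.End R (MvPolynomial σ R) :=
  ∑ i, (pderiv i).toLinearMap * (pderiv i).toLinearMap

variable {σ R}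

theorem laplacian_apply (p : MvPolynomial σ R) : laplacian σ R p = ∑ i, pderiv i (pderiv i p) := by
  simp [laplacian]

theorem laplacian_mul_mulLeft_X (i : σ) :
    laplacian σ R * LinearMap.mulLeft R (X i) =
      LinearMap.mulLeft R (X i) * laplacian σ R + 2 • (pderiv i).toLinearMap := by
  classical
  refine LinearMap.ext fun p => ?_
  simp [laplacian_apply, pderiv_X, Pi.single_apply, apply_ite (pderiv _), sum_add_distrib,
    two_smul, add_assoc]

theorem commute_laplacian_pderiv (i : σ) : Commute (laplacian σ R) (pderiv i).toLinearMap := by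
  refine Commute.sum_left _ _ _ fun j _ => ?_
  have hij : Commute ((pderiv j).toLinearMap : Module.End R (MvPolynomial σ R))
      (pderiv i).toLinearMap :=
    LinearMap.ext fun p => by simpa using pderiv_comm j i p
  exact hij.mul_left hij

theorem laplacian_locallyNilpotent (p : MvPolynomial σ R) : ∃ N, (laplacian σ R ^ N) p = 0 := by
  induction p using MvPolynomial.induction_on with
  | C a => exact ⟨1, by simp [laplacian_apply]⟩
  | add p q hp hq =>
    obtain ⟨N, hN⟩ := hp
    obtain ⟨N', hN'⟩ := hq
    refine ⟨max N N', ?_⟩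
    rw [map_add, pow_map_zero_of_le (le_max_left N N') hN,
      pow_map_zero_of_le (le_max_right N N') hN', add_zero]
  | mul_X p i hp =>
    obtain ⟨N, hN⟩ := hp
    refine ⟨N + 1, ?_⟩
    have := pow_succ_apply_eq_zero_of_mul_eq (laplacian_mul_mulLeft_X i)
      ((commute_laplacian_pderiv i).smul_right 2) hN
    rwa [LinearMap.mulLeft_apply, mul_comm] at this

end Laplacian

section Hermite

variable {σ K : Type*} [Field K] [Fintype σ]

variable (σ K) in
/-- `e^{-Δ/2}`: it sends `x^s` to `∏ i, He_{s i}(x_i)` (probabilists' Hermite polynomials), and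
`hermiteRaise` is the recursion `He_{n+1} = x He_n - He_n'`. -/
def hermiteMap : Module.End K (MvPolynomial σ K) :=
  expLocallyNilpotent (-1 / 2) (laplacian σ K) laplacian_locallyNilpotent

theorem hermiteMap_one : hermiteMap σ K 1 = 1 := by
  rw [hermiteMap, expLocallyNilpotent_apply_eq_sum (N := 1) (by simp [laplacian_apply])]
  simp

theorem hermiteMap_X_mul [CharZero K] (i : σ) (p : MvPolynomial σ K) :
    hermiteMap σ K (X i * p) = hermiteRaise i (hermiteMap σ K p) := by
  rw [hermiteMap, ← LinearMap.mulLeft_apply (R := K), expLocallyNilpotent_apply_of_mul_eq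
    (laplacian_mul_mulLeft_X i) ((commute_laplacian_pderiv i).smul_right 2), hermiteRaise,
    LinearMap.smul_apply, ← Nat.cast_smul_eq_nsmul K, smul_smul]
  norm_num [sub_eq_add_neg]

theorem hermiteMap_eq_self_iff [CharZero K] (p : MvPolynomial σ K) :
    hermiteMap σ K p = p ↔ laplacian σ K p = 0 :=
  expLocallyNilpotent_apply_eq_self_iff (by norm_num) p

theorem hermiteMap_monomial_one [CharZero K] {d : ℕ} (s : Fin d →₀ ℕ) :
    hermiteMap (Fin d) K (monomial s 1) =
      (List.finRange d).foldr (fun i q => (hermiteRaise i)^[s i] q) 1 := by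
  rw [monomial_one_eq_foldr_X_mul, Function.Semiconj.foldr_iterate (fun i => hermiteMap_X_mul i),
    hermiteMap_one]

end Hermite

end MvPolynomial

variable {d : ℕ}

theorem hasFDerivAt_peval (q : MvPolynomial (Fin d) ℝ) (x : EuclideanSpace ℝ (Fin d)) :
    HasFDerivAt (peval d q) (∑ k, peval d (pderiv k q) x • EuclideanSpace.proj (𝕜 := ℝ) k) x := by
  induction q using MvPolynomial.induction_on with
  | C a =>
    rw [show peval d (C a) = fun _ => a from funext fun _ => eval_C a]
    simpa [peval] using hasFDerivAt_const (𝕜 := ℝ) a x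
  | add p q hp hq =>
    rw [show peval d (p + q) = fun y => peval d p y + peval d q y by ext y; simp [peval]]
    refine (hp.add hq).congr_fderiv ?_
    simp [peval, add_smul, sum_add_distrib]
  | mul_X p l hp =>
    rw [show peval d (p * X l) = fun y => peval d p y * y l by ext y; simp [peval]]
    refine (hp.mul (EuclideanSpace.proj (𝕜 := ℝ) l).hasFDerivAt).congr_fderiv ?_
    classical
    ext v
    simp [peval, pderiv_X, Pi.single_apply, apply_ite, add_mul, sum_add_distrib, mul_sum]
    exact sum_congr rfl fun k _ => by ring

theorem pd_peval_neg_mul_gaussian (l : Fin d) (q : MvPolynomial (Fin d) ℝ) :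
    pd d l (fun y => peval d q (-y) * exp (-‖y‖ ^ 2 / 2)) =
      fun y => peval d (hermiteRaise l q) (-y) * exp (-‖y‖ ^ 2 / 2) := by
  funext y
  have hq := (hasFDerivAt_peval q (-y)).comp y (hasFDerivAt_id y).neg
  have hG : HasFDerivAt (fun x => exp (-‖x‖ ^ 2 / 2)) _ y :=
    (((hasFDerivAt_id y).norm_sq.const_mul (-1 / 2 : ℝ)).exp).congr_of_eventuallyEq
      (Filter.Eventually.of_forall fun x => by simp only [id]; ring_nf)
  have hprod : HasFDerivAt (fun y => peval d q (-y) * exp (-‖y‖ ^ 2 / 2)) _ y := hq.mul hG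
  rw [pd, hprod.fderiv]
  simp [hermiteRaise, peval, EuclideanSpace.inner_single_right]
  rw [show -1 / 2 * ‖y‖ ^ 2 = -‖y‖ ^ 2 / 2 by ring]
  ring

theorem Dmulti_gaussian (s : Fin d →₀ ℕ) :
    Dmulti d s (fun y => exp (-‖y‖ ^ 2 / 2)) =
      fun y => peval d (hermiteMap (Fin d) ℝ (monomial s 1)) (-y) * exp (-‖y‖ ^ 2 / 2) := by
  have hsemi (l : Fin d) : Function.Semiconj (fun q y => peval d q (-y) * exp (-‖y‖ ^ 2 / 2))
      (hermiteRaise l) (pd d l) := fun q => (pd_peval_neg_mul_gaussian l q).symm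
  have hone : (fun y : EuclideanSpace ℝ (Fin d) => exp (-‖y‖ ^ 2 / 2)) =
      fun y => peval d 1 (-y) * exp (-‖y‖ ^ 2 / 2) := by simp [peval]
  rw [Dmulti, hone, ← Function.Semiconj.foldr_iterate hsemi, hermiteMap_monomial_one]

theorem polyOp_gaussian (p : MvPolynomial (Fin d) ℝ) (x : EuclideanSpace ℝ (Fin d)) :
    polyOp d p (fun y => exp (-‖y‖ ^ 2 / 2)) x =
      peval d (hermiteMap (Fin d) ℝ p) (-x) * exp (-‖x‖ ^ 2 / 2) := by
  have hmono (s : Fin d →₀ ℕ) : monomial s (p.coeff s) = p.coeff s • monomial s 1 := by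
    rw [smul_monomial, smul_eq_mul, mul_one]
  conv_rhs => rw [p.as_sum]
  simp only [polyOp, Dmulti_gaussian, hmono, map_sum, map_smul, peval, smul_eval, sum_mul, mul_assoc]

theorem harmonic_iff_gaussian_eigen_general (d : ℕ) (p : MvPolynomial (Fin d) ℝ) :
    lapPoly d p = 0 ↔
      ∀ x : EuclideanSpace ℝ (Fin d),
        polyOp d p (fun y => Real.exp (-‖y‖ ^ 2 / 2)) x =
          peval d p (-x) * Real.exp (-‖x‖ ^ 2 / 2) := by
  have hlap : lapPoly d p = laplacian (Fin d) ℝ p := by rw [laplacian_apply, lapPoly]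
  simp_rw [polyOp_gaussian, mul_left_inj' (exp_pos _).ne', hlap, ← hermiteMap_eq_self_iff]
  refine ⟨fun h x => by rw [h], fun h => MvPolynomial.funext fun x => ?_⟩
  simpa [peval] using h (-WithLp.toLp 2 x)

theorem harmonic_iff_gaussian_eigen (d m : ℕ) (p : MvPolynomial (Fin d) ℝ)
    (hp : p.IsHomogeneous m) :
    lapPoly d p = 0 ↔
      ∀ x : EuclideanSpace ℝ (Fin d),
        polyOp d p (fun y => Real.exp (-‖y‖ ^ 2 / 2)) x =
          peval d p (-x) * Real.exp (-‖x‖ ^ 2 / 2) :=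
  harmonic_iff_gaussian_eigen_general d p
end
end
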